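/- Let H be an abelian subgroup of Sym_n. The monoid S_n(H) is cancellative if and only if the stabilizers of 1 and of n in H are both trivial. -/

import Mathlib

/-- The word `a_{σ(1)} ⋯ a_{σ(n)}` in the free monoid on `n` generators. -/
def permWord {n : ℕ} (σ : Equiv.Perm (Fin n)) : FreeMonoid (Fin n) :=
  FreeMonoid.ofList (List.ofFn fun i => σ i)

/-- The defining relations of `S_n(H)`. -/
def snRel (n : ℕ) (H : Set (Equiv.Perm (Fin n)))
    (a b : FreeMonoid (Fin n)) : Prop :=
  ∃ σ ∈ H, a = permWord 1 ∧ b = permWord σ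

/-- The congruence generated by the relations of `S_n(H)`. -/
def snCon (n : ℕ) (H : Set (Equiv.Perm (Fin n))) : Con (FreeMonoid (Fin n)) :=
  conGen (snRel n H)

/-- The monoid `S_n(H)` presented by `a_1,…,a_n` with relations
`a_1⋯a_n = a_{σ(1)}⋯a_{σ(n)}` for `σ ∈ H`. -/
abbrev SnMonoid (n : ℕ) (H : Set (Equiv.Perm (Fin n))) : Type :=
  (snCon n H).Quotient

/-- The canonical projection `π : FM_n → S_n(H)`. -/
def snPi (n : ℕ) (H : Set (Equiv.Perm (Fin n))) :
    FreeMonoid (Fin n) →* SnMonoid n H :=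
  (snCon n H).mk'

/-- The generator `a_i` of `S_n(H)`. -/
def aGen (n : ℕ) (H : Set (Equiv.Perm (Fin n))) (i : Fin n) : SnMonoid n H :=
  snPi n H (FreeMonoid.of i)

/-- The element `z = a_1 a_2 ⋯ a_n` of `S_n(H)`. -/
def zElem (n : ℕ) (H : Set (Equiv.Perm (Fin n))) : SnMonoid n H :=
  snPi n H (permWord 1)

/-- A (two-sided) ideal-like subset `I` of a monoid is prime if for all `u, v ∉ I`
there is `s` with `u * s * v ∉ I`. -/
def MonoidIdeal.IsPrime {M : Type*} [Monoid M] (I : Set M) : Prop :=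
  ∀ u v : M, u ∉ I → v ∉ I → ∃ s : M, u * s * v ∉ I



namespace SnAux

variable {n : ℕ}

abbrev Word (n : ℕ) := List (Fin n)

/-- The list of values of a permutation. -/
def pw (σ : Equiv.Perm (Fin n)) : Word n := List.ofFn fun i => σ i

@[simp] lemma pw_length (σ : Equiv.Perm (Fin n)) : (pw σ).length = n := by
  simp [pw]

lemma pw_injective (σ τ : Equiv.Perm (Fin n)) (h : pw σ = pw τ) : σ = τ := by
  unfold pw at h
  rw [List.ofFn_inj] at h
  exact Equiv.ext fun i => congrFun h i

lemma pw_cons (hn : 0 < n) (σ : Equiv.Perm (Fin n)) :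
    ∃ t : Word n, pw σ = σ ⟨0, hn⟩ :: t ∧ t.length = n - 1 := by
  match n, hn with
  | (m+1), _ =>
    refine ⟨List.ofFn fun i : Fin m => σ i.succ, ?_, by simp⟩
    unfold pw
    rw [List.ofFn_succ]
    rfl

variable (K : Set (Equiv.Perm (Fin n)))

/-- One elementary rewriting step. -/
def OneStep (w w' : Word n) : Prop :=
  ∃ x y σ τ, σ ∈ K ∧ τ ∈ K ∧ w = x ++ pw σ ++ y ∧ w' = x ++ pw τ ++ y

/-- Chains of elementary steps. -/
def Chain : Word n → Word n → Prop := Relation.ReflTransGen (OneStep K)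

variable {K}

lemma oneStep_symm {w w' : Word n} (h : OneStep K w w') : OneStep K w' w := by
  obtain ⟨x, y, σ, τ, hσ, hτ, h1, h2⟩ := h
  exact ⟨x, y, τ, σ, hτ, hσ, h2, h1⟩

lemma oneStep_length {w w' : Word n} (h : OneStep K w w') : w.length = w'.length := by
  obtain ⟨x, y, σ, τ, hσ, hτ, rfl, rfl⟩ := h
  simp

lemma chain_refl (w : Word n) : Chain K w w := Relation.ReflTransGen.refl

lemma chain_symm {w w' : Word n} (h : Chain K w w') : Chain K w' w := by
  induction h with
  | refl => exact Relation.ReflTransGen.refl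
  | tail _ h2 ih =>
    exact Relation.ReflTransGen.trans (Relation.ReflTransGen.single (oneStep_symm h2)) ih

lemma chain_trans {a b c : Word n} (h : Chain K a b) (h' : Chain K b c) : Chain K a c :=
  Relation.ReflTransGen.trans h h'

lemma chain_length {w w' : Word n} (h : Chain K w w') : w.length = w'.length := by
  induction h with
  | refl => rfl
  | tail _ h2 ih => exact ih.trans (oneStep_length h2)

lemma oneStep_append_left (c : Word n) {u v : Word n} (h : OneStep K u v) :
    OneStep K (c ++ u) (c ++ v) := by
  obtain ⟨x, y, σ, τ, hσ, hτ, rfl, rfl⟩ := h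
  exact ⟨c ++ x, y, σ, τ, hσ, hτ, by simp, by simp⟩

lemma oneStep_append_right (c : Word n) {u v : Word n} (h : OneStep K u v) :
    OneStep K (u ++ c) (v ++ c) := by
  obtain ⟨x, y, σ, τ, hσ, hτ, rfl, rfl⟩ := h
  exact ⟨x, y ++ c, σ, τ, hσ, hτ, by simp, by simp⟩

lemma chain_append_left (c : Word n) {u v : Word n} (h : Chain K u v) :
    Chain K (c ++ u) (c ++ v) := by
  induction h with
  | refl => exact chain_refl _
  | tail _ h2 ih => exact ih.tail (oneStep_append_left c h2)

lemma chain_append_right (c : Word n) {u v : Word n} (h : Chain K u v) :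
    Chain K (u ++ c) (v ++ c) := by
  induction h with
  | refl => exact chain_refl _
  | tail _ h2 ih => exact ih.tail (oneStep_append_right c h2)

lemma chain_of_small {w w' : Word n} (h : Chain K w w') (hlen : w.length < n) : w = w' := by
  induction h with
  | refl => rfl
  | tail h1 h2 ih =>
    exfalso
    obtain ⟨x, y, σ, τ, _, _, hb, _⟩ := h2
    have : (x ++ pw σ ++ y).length = w.length := by rw [← hb, ← chain_length h1, ih]
    simp at this
    omega

variable {n : ℕ} (K : Set (Equiv.Perm (Fin n)))

/-- A step whose window is at a positive position. -/
def Step1 (w w' : Word n) : Prop :=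
  ∃ x y σ τ, σ ∈ K ∧ τ ∈ K ∧ x ≠ [] ∧ w = x ++ pw σ ++ y ∧ w' = x ++ pw τ ++ y

/-- Chains of positive-position steps. -/
def T : Word n → Word n → Prop := Relation.ReflTransGen (Step1 K)

/-- A nontrivial step with window at position `0`. -/
def Step0 (w w' : Word n) : Prop :=
  ∃ s σ τ, σ ∈ K ∧ τ ∈ K ∧ σ ≠ τ ∧ w = pw σ ++ s ∧ w' = pw τ ++ s

variable {K}

lemma step1_oneStep {w w' : Word n} (h : Step1 K w w') : OneStep K w w' := by
  obtain ⟨x, y, σ, τ, hσ, hτ, _, h1, h2⟩ := h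
  exact ⟨x, y, σ, τ, hσ, hτ, h1, h2⟩

lemma T_chain {w w' : Word n} (h : T K w w') : Chain K w w' :=
  Relation.ReflTransGen.mono (fun _ _ hs => step1_oneStep hs) _ _ h

lemma T_trans {a b c : Word n} (h : T K a b) (h' : T K b c) : T K a c :=
  Relation.ReflTransGen.trans h h'

lemma step1_cons {i : Fin n} {u w' : Word n} (h : Step1 K (i :: u) w') :
    ∃ v, w' = i :: v ∧ OneStep K u v := by
  obtain ⟨x, y, σ, τ, hσ, hτ, hx, h1, h2⟩ := h
  match x, hx with
  | a :: x', _ =>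
    rw [List.cons_append, List.cons_append, List.cons.injEq] at h1
    exact ⟨x' ++ pw τ ++ y, by rw [h2, h1.1]; simp, ⟨x', y, σ, τ, hσ, hτ, h1.2, rfl⟩⟩

lemma T_cons {i : Fin n} {u w' : Word n} (h : T K (i :: u) w') :
    ∃ v, w' = i :: v ∧ Chain K u v := by
  induction h with
  | refl => exact ⟨u, rfl, chain_refl _⟩
  | tail _ h2 ih =>
    obtain ⟨v, rfl, hc⟩ := ih
    obtain ⟨v', hv', hs⟩ := step1_cons h2
    exact ⟨v', hv', hc.tail hs⟩

lemma T_of_chain_append {c : Word n} (hc : c ≠ []) {u v : Word n} (h : Chain K u v) :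
    T K (c ++ u) (c ++ v) := by
  induction h with
  | refl => exact Relation.ReflTransGen.refl
  | tail _ h2 ih =>
    obtain ⟨x, y, σ, τ, hσ, hτ, rfl, rfl⟩ := h2
    refine ih.tail ⟨c ++ x, y, σ, τ, hσ, hτ, by simp [hc], by simp, by simp⟩

variable (K) in
/-- Chains organised by the number of position-`0` steps. -/
inductive ChainN : ℕ → Word n → Word n → Prop
  | base {w w'} : T K w w' → ChainN 0 w w'
  | cons {m w x y w'} : T K w x → Step0 K x y → ChainN m y w' → ChainN (m + 1) w w'

lemma chainN_prepend_T {m : ℕ} {w x w' : Word n} (h : T K w x) (h' : ChainN K m x w') :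
    ChainN K m w w' := by
  cases h' with
  | base h2 => exact ChainN.base (T_trans h h2)
  | cons h2 h3 h4 => exact ChainN.cons (T_trans h h2) h3 h4

lemma chain_toChainN {w w' : Word n} (h : Chain K w w') : ∃ m, ChainN K m w w' := by
  induction h using Relation.ReflTransGen.head_induction_on with
  | refl => exact ⟨0, ChainN.base Relation.ReflTransGen.refl⟩
  | head h1 _ ih =>
    obtain ⟨m, hm⟩ := ih
    obtain ⟨x, y, σ, τ, hσ, hτ, h1, h2⟩ := h1
    match x, h1, h2 with
    | [], h1, h2 =>
      by_cases hστ : σ = τ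
      · subst hστ
        refine ⟨m, ?_⟩
        rw [h1, ← h2]
        exact hm
      · exact ⟨m + 1, ChainN.cons Relation.ReflTransGen.refl
          ⟨y, σ, τ, hσ, hτ, hστ, by simpa using h1, by simpa using h2⟩ hm⟩
    | (a :: x'), h1, h2 =>
      exact ⟨m, chainN_prepend_T (Relation.ReflTransGen.single
        ⟨a :: x', y, σ, τ, hσ, hτ, by simp, h1, h2⟩) hm⟩

lemma chainN_chain {m : ℕ} {w w' : Word n} (h : ChainN K m w w') : Chain K w w' := by
  induction h with
  | base h1 => exact T_chain h1
  | cons h1 h2 _ ih =>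
    obtain ⟨s, σ, τ, hσ, hτ, _, rfl, rfl⟩ := h2
    exact chain_trans (T_chain h1)
      (chain_trans (Relation.ReflTransGen.single ⟨[], s, σ, τ, hσ, hτ, by simp, by simp⟩) ih)


theorem key (hn : 0 < n)
    (hinj : ∀ σ τ, σ ∈ K → τ ∈ K → σ ⟨0, hn⟩ = τ ⟨0, hn⟩ → σ = τ) :
    ∀ ℓ : ℕ, ∀ u v : Word n, ∀ i : Fin n, u.length < ℓ →
      Chain K (i :: u) (i :: v) → Chain K u v := by
  intro ℓ
  induction ℓ using Nat.strong_induction_on with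
  | _ ℓ SIH =>
  have helper : ∀ q s s' : Word n, q.length + s.length < ℓ →
      Chain K (q ++ s) (q ++ s') → Chain K s s' := by
    intro q
    induction q with
    | nil => intro s s' _ h; simpa using h
    | cons a q ihq =>
      intro s s' hlen hch
      simp only [List.length_cons] at hlen
      have h1 : Chain K (q ++ s) (q ++ s') := by
        refine SIH (q.length + s.length + 1) (by omega) (q ++ s) (q ++ s') a ?_ ?_
        · simp
        · simpa using hch
      exact ihq s s' (by omega) h1
  have inner : ∀ m : ℕ, ∀ u v : Word n, ∀ i : Fin n, u.length < ℓ →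
      ChainN K m (i :: u) (i :: v) → Chain K u v := by
    intro m
    induction m using Nat.strong_induction_on with
    | _ m IH =>
    intro u v i hlen hm
    cases hm with
    | base hT =>
      obtain ⟨v', hv', hc⟩ := T_cons hT
      obtain ⟨-, rfl⟩ := List.cons.injEq .. ▸ hv'
      exact hc
    | @cons m0 _ x y _ hT h0 hrest =>
      obtain ⟨s, σ, τ, hσK, hτK, hστ, hx, hy⟩ := h0
      obtain ⟨x1, hx1, -⟩ := T_cons hT
      obtain ⟨tσ, htσ, htσlen⟩ := pw_cons hn σ
      have hσi : σ ⟨0, hn⟩ = i := by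
        have h := hx1.symm.trans hx
        rw [htσ, List.cons_append] at h
        exact ((List.cons.injEq ..).mp h).1.symm
      have hlenx : s.length + n = u.length + 1 := by
        have h := chain_length (T_chain hT)
        rw [hx] at h
        simp at h
        omega
      obtain ⟨tτ, htτ, htτlen⟩ := pw_cons hn τ
      have hτ0 : τ ⟨0, hn⟩ ≠ i := fun hcon =>
        hστ (hinj σ τ hσK hτK (by rw [hσi, hcon]))
      have hycons : y = τ ⟨0, hn⟩ :: (tτ ++ s) := by
        rw [hy, htτ, List.cons_append]
      cases hrest with
      | base hT2 =>
        exfalso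
        rw [hycons] at hT2
        obtain ⟨v2, hv2, -⟩ := T_cons hT2
        exact hτ0 (((List.cons.injEq ..).mp hv2).1.symm)
      | @cons m1 _ x2 y2 _ hT2 h02 hrest2 =>
        obtain ⟨s2, α, β, hαK, hβK, hαβ, hx2, hy2⟩ := h02
        rw [hycons] at hT2
        obtain ⟨z, hz, hcz⟩ := T_cons hT2
        obtain ⟨tα, htα, -⟩ := pw_cons hn α
        have hcomb : τ ⟨0, hn⟩ :: z = α ⟨0, hn⟩ :: (tα ++ s2) := by
          rw [← hz, hx2, htα, List.cons_append]
        have hα0 : α ⟨0, hn⟩ = τ ⟨0, hn⟩ := (((List.cons.injEq ..).mp hcomb).1).symm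
        have hατ : α = τ := hinj α τ hαK hτK hα0
        subst hατ
        have htt : tα = tτ := by
          have := htα.symm.trans htτ
          exact ((List.cons.injEq ..).mp this).2
        have hz2 : z = tτ ++ s2 := by
          have := ((List.cons.injEq ..).mp hcomb).2
          rw [this, htt]
        have hcc : Chain K (tτ ++ s) (tτ ++ s2) := hz2 ▸ hcz
        have hss2 : Chain K s s2 := by
          refine helper tτ s s2 ?_ hcc
          rw [htτlen]
          omega
        have hT3 : T K (i :: u) (pw σ ++ s2) := by
          have l1 : T K (pw σ ++ s) (pw σ ++ s2) :=
            T_of_chain_append (by rw [htσ]; simp) hss2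
          exact T_trans (hx ▸ hT) l1
        by_cases hσβ : σ = β
        · have hres : ChainN K m1 (i :: u) (i :: v) := by
            refine chainN_prepend_T ?_ hrest2
            rw [hy2, ← hσβ]
            exact hT3
          exact IH m1 (by omega) u v i hlen hres
        · have hres : ChainN K (m1 + 1) (i :: u) (i :: v) :=
            ChainN.cons hT3 ⟨s2, σ, β, hσK, hβK, hσβ, rfl, hy2⟩ hrest2
          exact IH (m1 + 1) (by omega) u v i hlen hres
  intro u v i hlen hch
  obtain ⟨m, hm⟩ := chain_toChainN hch
  exact inner m u v i hlen hm


theorem cancel_word_left (hn : 0 < n)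
    (hinj : ∀ σ τ, σ ∈ K → τ ∈ K → σ ⟨0, hn⟩ = τ ⟨0, hn⟩ → σ = τ)
    (a : Word n) : ∀ u v : Word n, Chain K (a ++ u) (a ++ v) → Chain K u v := by
  induction a with
  | nil => intro u v h; simpa using h
  | cons i a ih =>
    intro u v h
    simp only [List.cons_append] at h
    exact ih u v (key hn hinj ((a ++ u).length + 1) (a ++ u) (a ++ v) i (by omega) h)

variable (K) in
/-- The reversed permutation set. -/
def Krev : Set (Equiv.Perm (Fin n)) := (fun σ => σ * Fin.revPerm) '' K

lemma pw_reverse (σ : Equiv.Perm (Fin n)) :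
    (pw σ).reverse = pw (σ * Fin.revPerm) := by
  unfold pw
  rw [List.ofFn_eq_map, List.ofFn_eq_map, ← List.map_reverse, List.finRange_reverse,
    List.map_map]
  rfl

lemma oneStep_reverse {w w' : Word n} (h : OneStep K w w') :
    OneStep (Krev K) w.reverse w'.reverse := by
  obtain ⟨x, y, σ, τ, hσ, hτ, rfl, rfl⟩ := h
  refine ⟨y.reverse, x.reverse, σ * Fin.revPerm, τ * Fin.revPerm,
    ⟨σ, hσ, rfl⟩, ⟨τ, hτ, rfl⟩, ?_, ?_⟩ <;>
    simp [← pw_reverse, List.reverse_append]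

lemma chain_reverse {w w' : Word n} (h : Chain K w w') :
    Chain (Krev K) w.reverse w'.reverse := by
  induction h with
  | refl => exact chain_refl _
  | tail _ h2 ih => exact ih.tail (oneStep_reverse h2)

lemma revPerm_mul_revPerm : (Fin.revPerm : Equiv.Perm (Fin n)) * Fin.revPerm = 1 := by
  ext i
  simp

lemma Krev_Krev : Krev (Krev K) = K := by
  ext σ
  constructor
  · rintro ⟨τ, ⟨ρ, hρ, rfl⟩, rfl⟩
    simp only
    rwa [mul_assoc, revPerm_mul_revPerm, mul_one]
  · intro hσ
    exact ⟨σ * Fin.revPerm, ⟨σ, hσ, rfl⟩, by simp only; rw [mul_assoc, revPerm_mul_revPerm, mul_one]⟩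

theorem cancel_word_right (hn : 0 < n)
    (hinj : ∀ σ τ, σ ∈ Krev K → τ ∈ Krev K → σ ⟨0, hn⟩ = τ ⟨0, hn⟩ → σ = τ)
    (a u v : Word n) (h : Chain K (u ++ a) (v ++ a)) : Chain K u v := by
  have h1 := chain_reverse h
  simp only [List.reverse_append] at h1
  have h2 := cancel_word_left hn hinj a.reverse u.reverse v.reverse h1
  have h3 := chain_reverse h2
  rw [Krev_Krev, List.reverse_reverse, List.reverse_reverse] at h3
  exact h3


section Bridge

variable {H : Set (Equiv.Perm (Fin n))}

variable (K) in
/-- The chain relation as a congruence on the free monoid. -/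
def chainCon : Con (FreeMonoid (Fin n)) where
  r u v := Chain K u.toList v.toList
  iseqv := ⟨fun _ => chain_refl _, chain_symm, chain_trans⟩
  mul' h h' := by
    simp only [FreeMonoid.toList_mul]
    exact chain_trans (chain_append_right _ h) (chain_append_left _ h')

lemma toList_permWord (σ : Equiv.Perm (Fin n)) :
    FreeMonoid.toList (permWord σ) = pw σ := rfl

lemma snCon_of_chain {u v : Word n} (h : Chain H u v) :
    snCon n H (FreeMonoid.ofList u) (FreeMonoid.ofList v) := by
  have base : ∀ σ ∈ H, snCon n H (permWord 1) (permWord σ) := fun σ hσ =>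
    ConGen.Rel.of _ _ ⟨σ, hσ, rfl, rfl⟩
  induction h with
  | refl => exact (snCon n H).refl _
  | tail _ h2 ih =>
    refine (snCon n H).trans ih ?_
    obtain ⟨x, y, σ, τ, hσ, hτ, rfl, rfl⟩ := h2
    rw [FreeMonoid.ofList_append, FreeMonoid.ofList_append,
      FreeMonoid.ofList_append, FreeMonoid.ofList_append]
    refine (snCon n H).mul ?_ ((snCon n H).refl _)
    refine (snCon n H).mul ((snCon n H).refl _) ?_
    exact (snCon n H).trans ((snCon n H).symm (base σ hσ)) (base τ hτ)

lemma chain_of_snCon (h1 : (1 : Equiv.Perm (Fin n)) ∈ H) {u v : FreeMonoid (Fin n)}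
    (h : snCon n H u v) : Chain H (FreeMonoid.toList u) (FreeMonoid.toList v) := by
  have hle : snCon n H ≤ chainCon H := by
    apply Con.conGen_le.mpr
    rintro a b ⟨σ, hσ, rfl, rfl⟩
    show Chain H (FreeMonoid.toList (permWord 1)) (FreeMonoid.toList (permWord σ))
    rw [toList_permWord, toList_permWord]
    exact Relation.ReflTransGen.single ⟨[], [], 1, σ, h1, hσ, by simp, by simp⟩
  exact hle h

lemma snPi_eq_iff {u v : FreeMonoid (Fin n)} :
    snPi n H u = snPi n H v ↔ snCon n H u v := by
  show (snCon n H).mk' u = (snCon n H).mk' v ↔ _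
  rw [Con.coe_mk']
  exact Con.eq _

end Bridge

end SnAux


open SnAux in
theorem stmt2 (n : ℕ) (hn : 1 ≤ n) (H : Subgroup (Equiv.Perm (Fin n)))
    (hab : ∀ σ ∈ H, ∀ τ ∈ H, σ * τ = τ * σ) :
    (∀ a b c : SnMonoid n ↑H, (a * b = a * c → b = c) ∧ (b * a = c * a → b = c)) ↔
      ((∀ σ ∈ H, σ ⟨0, by omega⟩ = ⟨0, by omega⟩ → σ = 1) ∧
       (∀ σ ∈ H, σ ⟨n - 1, by omega⟩ = ⟨n - 1, by omega⟩ → σ = 1)) := by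
  have h1mem : (1 : Equiv.Perm (Fin n)) ∈ (↑H : Set (Equiv.Perm (Fin n))) := H.one_mem
  constructor
  · -- cancellative implies trivial stabilizers
    intro hc
    have hrel : ∀ σ ∈ H, snCon n ↑H (permWord 1) (permWord σ) := fun σ hσ =>
      ConGen.Rel.of _ _ ⟨σ, hσ, rfl, rfl⟩
    obtain ⟨m, rfl⟩ : ∃ m, n = m + 1 := ⟨n - 1, by omega⟩
    constructor
    · intro σ hσ hfix
      have hfix0 : σ 0 = 0 := by simpa using hfix
      have hdec : ∀ γ : Equiv.Perm (Fin (m + 1)), permWord γ =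
          FreeMonoid.of (γ 0) * FreeMonoid.ofList (List.ofFn fun i : Fin m => γ i.succ) := by
        intro γ
        unfold permWord
        rw [List.ofFn_succ]
        rfl
      have h := hrel σ hσ
      rw [hdec 1, hdec σ] at h
      have hπ := snPi_eq_iff.mpr h
      rw [map_mul, map_mul] at hπ
      have h10 : (1 : Equiv.Perm (Fin (m + 1))) 0 = 0 := rfl
      rw [h10, hfix0] at hπ
      have hbc := (hc (snPi _ _ (FreeMonoid.of 0)) _ _).1 hπ
      have hcon := snPi_eq_iff.mp hbc
      have hch := chain_of_snCon h1mem hcon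
      have heq : (List.ofFn fun i : Fin m => (1 : Equiv.Perm (Fin (m + 1))) i.succ)
          = List.ofFn fun i : Fin m => σ i.succ := chain_of_small hch (by simp)
      have hfun := List.ofFn_inj.mp heq
      ext i
      refine Fin.cases ?_ ?_ i
      · simp [hfix0]
      · intro j
        have := congrFun hfun j
        simp [← this]
    · intro σ hσ hfix
      have hfixN : σ (Fin.last m) = Fin.last m := hfix
      have hdec : ∀ γ : Equiv.Perm (Fin (m + 1)), permWord γ =
          FreeMonoid.ofList (List.ofFn fun i : Fin m => γ i.castSucc) *
            FreeMonoid.of (γ (Fin.last m)) := by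
        intro γ
        unfold permWord
        rw [List.ofFn_succ', List.concat_eq_append, FreeMonoid.ofList_append]
        rfl
      have h := hrel σ hσ
      rw [hdec 1, hdec σ] at h
      have hπ := snPi_eq_iff.mpr h
      rw [map_mul, map_mul] at hπ
      have h1N : (1 : Equiv.Perm (Fin (m + 1))) (Fin.last m) = Fin.last m := rfl
      rw [h1N, hfixN] at hπ
      have hbc := (hc (snPi _ _ (FreeMonoid.of (Fin.last m))) _ _).2 hπ
      have hcon := snPi_eq_iff.mp hbc
      have hch := chain_of_snCon h1mem hcon
      have heq : (List.ofFn fun i : Fin m => (1 : Equiv.Perm (Fin (m + 1))) i.castSucc)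
          = List.ofFn fun i : Fin m => σ i.castSucc := chain_of_small hch (by simp)
      have hfun := List.ofFn_inj.mp heq
      ext i
      refine Fin.lastCases ?_ ?_ i
      · simp [hfixN]
      · intro j
        have := congrFun hfun j
        simp [← this]
  · -- trivial stabilizers imply cancellative
    rintro ⟨h0, hN⟩
    have hn0 : 0 < n := hn
    have hinjL : ∀ σ τ : Equiv.Perm (Fin n), σ ∈ (↑H : Set (Equiv.Perm (Fin n))) →
        τ ∈ (↑H : Set (Equiv.Perm (Fin n))) → σ ⟨0, hn0⟩ = τ ⟨0, hn0⟩ → σ = τ := by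
      intro σ τ hσ hτ heq
      have hmem : τ⁻¹ * σ ∈ H := H.mul_mem (H.inv_mem hτ) hσ
      have hfix : (τ⁻¹ * σ) ⟨0, hn0⟩ = ⟨0, hn0⟩ := by
        rw [Equiv.Perm.mul_apply, heq, ← Equiv.Perm.mul_apply, inv_mul_cancel, Equiv.Perm.one_apply]
      have := h0 _ hmem hfix
      rwa [inv_mul_eq_one, eq_comm] at this
    have hinjN : ∀ σ τ : Equiv.Perm (Fin n), σ ∈ (↑H : Set (Equiv.Perm (Fin n))) →
        τ ∈ (↑H : Set (Equiv.Perm (Fin n))) → σ ⟨n - 1, by omega⟩ = τ ⟨n - 1, by omega⟩ →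
        σ = τ := by
      intro σ τ hσ hτ heq
      have hmem : τ⁻¹ * σ ∈ H := H.mul_mem (H.inv_mem hτ) hσ
      have hfix : (τ⁻¹ * σ) ⟨n - 1, by omega⟩ = ⟨n - 1, by omega⟩ := by
        rw [Equiv.Perm.mul_apply, heq, ← Equiv.Perm.mul_apply, inv_mul_cancel, Equiv.Perm.one_apply]
      have := hN _ hmem hfix
      rwa [inv_mul_eq_one, eq_comm] at this
    have hrev0 : (Fin.revPerm : Equiv.Perm (Fin n)) ⟨0, hn0⟩ = ⟨n - 1, by omega⟩ := by
      ext
      simp [Fin.rev]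
    have hinjR : ∀ σ τ : Equiv.Perm (Fin n), σ ∈ Krev (↑H : Set (Equiv.Perm (Fin n))) →
        τ ∈ Krev (↑H : Set (Equiv.Perm (Fin n))) → σ ⟨0, hn0⟩ = τ ⟨0, hn0⟩ → σ = τ := by
      rintro _ _ ⟨σ, hσ, rfl⟩ ⟨τ, hτ, rfl⟩ heq
      simp only [Equiv.Perm.mul_apply, hrev0] at heq
      rw [hinjN σ τ hσ hτ heq]
    intro a b c
    obtain ⟨wa, rfl⟩ := Con.mk'_surjective a
    obtain ⟨wb, rfl⟩ := Con.mk'_surjective b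
    obtain ⟨wc, rfl⟩ := Con.mk'_surjective c
    constructor
    · intro hab
      have hπ : snPi n ↑H (wa * wb) = snPi n ↑H (wa * wc) := by
        rw [map_mul, map_mul]
        exact hab
      have hch := chain_of_snCon h1mem (snPi_eq_iff.mp hπ)
      rw [FreeMonoid.toList_mul, FreeMonoid.toList_mul] at hch
      have hch2 := cancel_word_left hn0 hinjL (FreeMonoid.toList wa) _ _ hch
      exact snPi_eq_iff.mpr (snCon_of_chain hch2)
    · intro hab
      have hπ : snPi n ↑H (wb * wa) = snPi n ↑H (wc * wa) := by
        rw [map_mul, map_mul]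
        exact hab
      have hch := chain_of_snCon h1mem (snPi_eq_iff.mp hπ)
      rw [FreeMonoid.toList_mul, FreeMonoid.toList_mul] at hch
      have hch2 := cancel_word_right hn0 hinjR (FreeMonoid.toList wa) _ _ hch
      exact snPi_eq_iff.mpr (snCon_of_chain hch2)
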